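/- arXiv:2211.15573 — 2 statements merged into one kernel-verified Lean document; each statement's English description precedes it below -/
import Mathlib

section
/- Let W be the principal branch of the Lambert W function. For any constants A>0 and B∈ℝ: lim_{y→∞} W(A·y·e^{yB})/y = max(B, 0). -/
/-!
For `y > 0`, `w = W(A y e^{yB})` is positive with `w e^w = A y e^{yB}`. As `t ↦ t e^t` is strictly
increasing on `[0, ∞)`, `w / y < c` as soon as `A y e^{yB} < c y e^{cy}`, and `c < w / y` as soon as
the reverse holds with `c ≥ 0`. Comparing the exponential rates `B` and `c`, the first happens for
large `y` when `c > max B 0`, the second when `0 ≤ c < B`; for `c < 0` positivity of `w` suffices.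
-/

open Real Filter

lemma lt_of_mul_exp_lt_mul_exp {a b : ℝ} (hb : 0 ≤ b) (h : a * exp a < b * exp b) : a < b := by
  by_contra! hba
  exact h.not_ge (mul_le_mul hba (exp_le_exp.2 hba) (exp_pos b).le (hb.trans hba))

lemma eventually_mul_mul_exp_lt_mul_mul_exp (p : ℝ) {q s t : ℝ} (hq : 0 < q) (hst : s < t) :
    ∀ᶠ y in atTop, p * y * exp (s * y) < q * y * exp (t * y) := by
  have hgrowth : Tendsto (fun y => q * exp ((t - s) * y)) atTop atTop :=
    (tendsto_exp_atTop.comp (tendsto_id.const_mul_atTop (sub_pos.2 hst))).const_mul_atTop hq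
  filter_upwards [hgrowth.eventually_gt_atTop p, eventually_gt_atTop 0] with y hp hy
  have hsplit : exp (t * y) = exp ((t - s) * y) * exp (s * y) := by
    rw [← exp_add]; ring_nf
  calc p * y * exp (s * y) = p * (y * exp (s * y)) := by ring
    _ < q * exp ((t - s) * y) * (y * exp (s * y)) := by gcongr
    _ = q * y * exp (t * y) := by rw [hsplit]; ring

theorem stmt9 (W : ℝ → ℝ)
    (hW : ∀ y : ℝ, -Real.exp (-1) ≤ y → -1 ≤ W y ∧ W y * Real.exp (W y) = y)
    (A B : ℝ) (hA : 0 < A) :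
    Filter.Tendsto (fun y => W (A * y * Real.exp (y * B)) / y)
      Filter.atTop (nhds (max B 0)) := by
  have hW_eq : ∀ y, 0 < y → W (A * y * exp (y * B)) * exp (W (A * y * exp (y * B)))
      = A * y * exp (B * y) := fun y hy => by
    have hx : 0 < A * y * exp (y * B) := by positivity
    rw [(hW _ ((neg_nonpos.2 (exp_pos _).le).trans hx.le)).2, mul_comm y B]
  have hW_pos : ∀ y, 0 < y → 0 < W (A * y * exp (y * B)) := fun y hy => by
    have hx : 0 < A * y * exp (B * y) := by positivity
    exact (pos_iff_pos_of_mul_pos (hW_eq y hy ▸ hx)).2 (exp_pos _)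
  refine tendsto_order.2 ⟨fun c hc => ?_, fun c hc => ?_⟩
  · rcases lt_or_ge c 0 with hc0 | hc0
    · filter_upwards [eventually_gt_atTop 0] with y hy
      exact hc0.trans (div_pos (hW_pos y hy) hy)
    · have hcB : c < B := by simpa [hc0.not_gt] using hc
      filter_upwards [eventually_gt_atTop 0, eventually_mul_mul_exp_lt_mul_mul_exp c hA hcB]
        with y hy hxy
      rw [lt_div_iff₀ hy]
      exact lt_of_mul_exp_lt_mul_exp (hW_pos y hy).le (hW_eq y hy ▸ hxy)
  · obtain ⟨hBc, hc0⟩ := max_lt_iff.1 hc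
    filter_upwards [eventually_gt_atTop 0, eventually_mul_mul_exp_lt_mul_mul_exp A hc0 hBc]
      with y hy hxy
    rw [div_lt_iff₀ hy]
    exact lt_of_mul_exp_lt_mul_exp (by positivity) (hW_eq y hy ▸ hxy)
end

section
/- Let W be the principal branch of the Lambert W function, A > 0, B̌ ∈ ℝ, and let (η_n) be a sequence with η_n → ∞ and (κ̃_n) a sequence with κ̃_n → ∞. Then η_n·W((A/η_n)·e^{B̌/η_n + κ̃_n}) → ∞. -/
/-!
With `t = η * W x`, the equation `W x * exp (W x) = x` becomes `t * exp (t / η) = A * exp (B / η + κ)`,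
which tends to infinity; since `t / η` is small whenever `t` is bounded, `t` must tend to infinity.
-/

open Filter Real

/-- For `t ≤ M ≤ η` we have `t * exp (t / η) ≤ M * e`. -/
theorem tendsto_atTop_of_tendsto_mul_exp_div {ι : Type*} {l : Filter ι} {t η : ι → ℝ}
    (hη : Tendsto η l atTop) (h : Tendsto (fun i => t i * exp (t i / η i)) l atTop) :
    Tendsto t l atTop := by
  rw [tendsto_atTop]
  intro M
  set M' := max M 1
  have hM' : 0 < M' := lt_of_lt_of_le one_pos (le_max_right _ _)
  filter_upwards [hη.eventually_ge_atTop M', h.eventually_gt_atTop (M' * exp 1)]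
    with i hηi hti
  by_contra! hlt
  have htM' : t i ≤ M' := hlt.le.trans (le_max_left _ _)
  have hdiv : t i / η i ≤ 1 := (div_le_one (hM'.trans_le hηi)).2 (htM'.trans hηi)
  have : t i * exp (t i / η i) ≤ M' * exp 1 :=
    mul_le_mul htM' (exp_le_exp.2 hdiv) (exp_pos _).le hM'.le
  linarith

theorem stmt12 (W : ℝ → ℝ)
    (hW : ∀ y : ℝ, -Real.exp (-1) ≤ y → -1 ≤ W y ∧ W y * Real.exp (W y) = y)
    (A B : ℝ) (hA : 0 < A) (η κ : ℕ → ℝ)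
    (hη : Filter.Tendsto η Filter.atTop Filter.atTop)
    (hκ : Filter.Tendsto κ Filter.atTop Filter.atTop) :
    Filter.Tendsto (fun n => η n * W ((A / η n) * Real.exp (B / η n + κ n)))
      Filter.atTop Filter.atTop := by
  apply tendsto_atTop_of_tendsto_mul_exp_div hη
  have hgrowth : Tendsto (fun n => A * exp (B / η n + κ n)) atTop atTop :=
    (tendsto_exp_atTop.comp
      ((tendsto_const_nhds.div_atTop hη).add_atTop hκ)).const_mul_atTop hA
  refine hgrowth.congr' ?_
  filter_upwards [hη.eventually_gt_atTop 0] with n hηn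
  have hx : -exp (-1) ≤ A / η n * exp (B / η n + κ n) := by
    have := exp_pos (-1)
    have : 0 < A / η n * exp (B / η n + κ n) := by positivity
    linarith
  rw [mul_div_cancel_left₀ _ hηn.ne', mul_assoc, (hW _ hx).2]
  field_simp
end
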